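/- Let n ≥ 1 and let F be an upset of a De Morgan lattice L. Then F is a Kalman prime n-filter on L if and only if there exist a homomorphism of De Morgan lattices h : L → (Fin n → Bool × Bool) and a function s : Fin n → Bool such that for every x ∈ L and i : Fin n, if s i = true then (h x i).2 = true implies (h x i).1 = true, and if s i = false then (h x i).1 = true implies (h x i).2 = true, and F = {x : ∃ i, (h x i).1 = true}. (Kalman prime n-filters are precisely the homomorphic preimages of the designated sets of the dual products P₁^{⊗i} ⊗ K₁^{⊗j} with i + j = n.) -/

import Mathlib

/-- A De Morgan lattice: a distributive lattice with an antitone involution. -/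
class DeMorgan (L : Type*) extends DistribLattice L where
  dneg : L → L
  dneg_dneg : ∀ x : L, dneg (dneg x) = x
  dneg_sup : ∀ x y : L, dneg (x ⊔ y) = dneg x ⊓ dneg y

prefix:max "∼" => DeMorgan.dneg

section Defs

variable {α : Type*}

/-- An upward closed subset of a lattice. -/
def IsUpset [Lattice α] (F : Set α) : Prop :=
  ∀ ⦃x y : α⦄, x ∈ F → x ≤ y → y ∈ F

/-- A lattice filter: an upset closed under binary meets. -/
def IsLatFilter [Lattice α] (F : Set α) : Prop :=
  IsUpset F ∧ ∀ x y : α, x ∈ F → y ∈ F → x ⊓ y ∈ F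

/-- An `n`-filter: an upset such that for every nonempty finite `Y`, if the meet of
every nonempty subset of `Y` of size at most `n` lies in `F`, then so does the meet of `Y`. -/
def IsNFilter [Lattice α] (n : ℕ) (F : Set α) : Prop :=
  IsUpset F ∧ ∀ (Y : Finset α) (hY : Y.Nonempty),
    (∀ (X : Finset α) (hX : X.Nonempty), X ⊆ Y → X.card ≤ n → X.inf' hX id ∈ F) →
    Y.inf' hY id ∈ F

/-- A prime upset: `x ⊔ y ∈ F` implies `x ∈ F` or `y ∈ F`. -/
def IsPrimeUpset [Lattice α] (F : Set α) : Prop :=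
  ∀ x y : α, x ⊔ y ∈ F → x ∈ F ∨ y ∈ F

/-- A downward closed subset of a lattice. -/
def IsDownset [Lattice α] (I : Set α) : Prop :=
  ∀ ⦃x y : α⦄, x ∈ I → y ≤ x → y ∈ I

/-- A lattice ideal: a downset closed under binary joins. -/
def IsIdeal [Lattice α] (I : Set α) : Prop :=
  IsDownset I ∧ ∀ x y : α, x ∈ I → y ∈ I → x ⊔ y ∈ I

/-- An `n`-ideal: the order dual notion of an `n`-filter. -/
def IsNIdeal [Lattice α] (n : ℕ) (I : Set α) : Prop :=
  IsDownset I ∧ ∀ (Y : Finset α) (hY : Y.Nonempty),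
    (∀ (X : Finset α) (hX : X.Nonempty), X ⊆ Y → X.card ≤ n → X.sup' hX id ∈ I) →
    Y.sup' hY id ∈ I

variable {L : Type*} [DeMorgan L]

/-- Almost complete upset: `x ∈ F` implies `x ⊓ (y ⊔ ∼y) ∈ F`. -/
def AlmostComplete (F : Set L) : Prop := ∀ x ∈ F, ∀ y : L, x ⊓ (y ⊔ ∼y) ∈ F

/-- Complete upset: almost complete and nonempty. -/
def IsCompleteUpset (F : Set L) : Prop := AlmostComplete F ∧ F.Nonempty

/-- Almost consistent upset: `(x ⊓ ∼x) ⊔ y ∈ F` implies `y ∈ F`. -/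
def AlmostConsistent (F : Set L) : Prop := ∀ x y : L, (x ⊓ ∼x) ⊔ y ∈ F → y ∈ F

/-- Consistent upset: almost consistent and not total. -/
def IsConsistentUpset (F : Set L) : Prop := AlmostConsistent F ∧ F ≠ Set.univ

/-- Classical upset: complete and consistent. -/
def IsClassicalUpset (F : Set L) : Prop := IsCompleteUpset F ∧ IsConsistentUpset F

/-- Kalman upset. -/
def IsKalmanUpset (F : Set L) : Prop :=
  ∀ x y z u : L, ((x ⊓ ∼x) ⊓ z) ⊔ u ∈ F → ((y ⊔ ∼y) ⊓ z) ⊔ u ∈ F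

/-- A homomorphism of De Morgan lattices. -/
def IsDMHom {L M : Type*} [DeMorgan L] [DeMorgan M] (h : L → M) : Prop :=
  (∀ x y : L, h (x ⊓ y) = h x ⊓ h y) ∧ (∀ x y : L, h (x ⊔ y) = h x ⊔ h y) ∧
    ∀ x : L, h (∼x) = ∼(h x)

/-- The filter generated by all elements of the form `x ⊔ ∼x`. -/
def Fcomp (L : Type*) [DeMorgan L] : Set L :=
  {a | ∃ (s : Finset L) (hs : s.Nonempty), s.inf' hs (fun x => x ⊔ ∼x) ≤ a}

/-- The `n`-filter generated by a set. -/
def nFilterGen (n : ℕ) (U : Set L) : Set L :=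
  ⋂₀ {F : Set L | IsNFilter n F ∧ U ⊆ F}

/-- `Comp U`. -/
def CompCl (U : Set L) : Set L := {x | ∃ a ∈ U, ∃ f ∈ Fcomp L, a ⊓ f ≤ x}

/-- `Cons U`. -/
def ConsCl (U : Set L) : Set L := {x | ∃ f ∈ Fcomp L, ∼f ⊔ x ∈ U}

/-- A congruence of De Morgan lattices, as a binary relation. -/
def IsCongruence (θ : L → L → Prop) : Prop :=
  Equivalence θ ∧
  (∀ a b c d : L, θ a b → θ c d → θ (a ⊓ c) (b ⊓ d)) ∧
  (∀ a b c d : L, θ a b → θ c d → θ (a ⊔ c) (b ⊔ d)) ∧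
  ∀ a b : L, θ a b → θ (∼a) (∼b)

end Defs

/-- The four-element De Morgan lattice `DM₁` on `Bool × Bool`. -/
instance : DeMorgan (Bool × Bool) :=
  { (inferInstance : DistribLattice (Bool × Bool)) with
    dneg := fun p => (!p.2, !p.1)
    dneg_dneg := by decide
    dneg_sup := by decide }

/-- Powers of `DM₁`, with componentwise operations. -/
instance {ι : Type*} : DeMorgan (ι → Bool × Bool) :=
  { (inferInstance : DistribLattice (ι → Bool × Bool)) with
    dneg := fun f i => ∼(f i)
    dneg_dneg := fun f => funext fun i => DeMorgan.dneg_dneg (f i)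
    dneg_sup := fun f g => funext fun i => DeMorgan.dneg_sup (f i) (g i) }

/-!
A prime `n`-filter `F` is the union of the maximal filters contained in it, and these are prime.
There are at most `n` of them: from `n + 1` of them one builds `n + 1` elements the meet of any `n`
of which lies in `F`, while the meet of all of them does not. The Kalman condition forces each such
filter `G` to be complete (`z ∈ G ∨ ∼z ∈ G`) or consistent (`z ∈ G → ∼z ∉ G`), so that
`x ↦ (x ∈ G, ∼x ∉ G)` is a homomorphism into one of the three-element subalgebras of `DM₁`.
Conversely, the preimage of the designated filter `{a | a.1}` under such a homomorphism is a Kalman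
prime filter, and a union of `n` filters is an `n`-filter.
-/

lemma exists_fin_range_eq_of_card_le {β : Type*} {T : Finset β} {n : ℕ} (hT : T.Nonempty)
    (hcard : T.card ≤ n) : ∃ g : Fin n → β, Set.range g = T := by
  obtain ⟨e⟩ := Function.Embedding.nonempty_of_card_le (α := T) (β := Fin n)
    (by simpa using hcard)
  have : Nonempty T := hT.to_subtype
  refine ⟨Subtype.val ∘ Function.invFun e, ?_⟩
  rw [Set.range_comp, (Function.invFun_surjective e.injective).range_eq, Set.image_univ,
    Subtype.range_coe]

section Lattice

variable {α : Type*} [Lattice α] {F G H : Set α} {n : ℕ}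

lemma IsNFilter.inf'_mem_of_forall_card_le (hN : IsNFilter n F) {ι : Type*} (s : Finset ι)
    (hs : s.Nonempty) (z : ι → α)
    (h : ∀ t ⊆ s, ∀ ht : t.Nonempty, t.card ≤ n → t.inf' ht z ∈ F) : s.inf' hs z ∈ F := by
  classical
  have hY := hN.2 (s.image z) (hs.image z) fun X hX hXs hXn => by
    obtain ⟨t, hts, hinj, rfl⟩ := Finset.exists_subset_injOn_image_eq_of_surjOn (s : Set ι) X
      fun x hx => by simpa using hXs hx
    rw [Finset.card_image_of_injOn hinj] at hXn
    simpa using h t (by exact_mod_cast hts) hX.of_image hXn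
  simpa using hY

lemma isNFilter_iUnion {ι : Type*} [Fintype ι] [Nonempty ι] (hcard : Fintype.card ι ≤ n)
    {G : ι → Set α} (hG : ∀ i, IsLatFilter (G i)) : IsNFilter n (⋃ i, G i) := by
  classical
  refine ⟨fun x y hx hxy => ?_, fun Y hY hsub => ?_⟩
  · obtain ⟨i, hi⟩ := Set.mem_iUnion.1 hx
    exact Set.mem_iUnion.2 ⟨i, (hG i).1 hi hxy⟩
  · by_contra hYG
    have hwit : ∀ i, ∃ a ∈ Y, a ∉ G i := fun i => by
      by_contra! hall
      exact hYG (Set.mem_iUnion.2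
        ⟨i, Finset.inf'_mem _ (fun x hx y hy => (hG i).2 x y hx hy) _ _ _ hall⟩)
    choose a haY haG using hwit
    have hX := hsub (Finset.univ.image a) (Finset.univ_nonempty.image a)
      (Finset.image_subset_iff.2 fun i _ => haY i) (Finset.card_image_le.trans hcard)
    obtain ⟨i, hi⟩ := Set.mem_iUnion.1 hX
    exact haG i ((hG i).1 hi (Finset.inf'_le _ (Finset.mem_image_of_mem a (Finset.mem_univ i))))

lemma IsPrimeUpset.iUnion {ι : Type*} {G : ι → Set α} (hG : ∀ i, IsPrimeUpset (G i)) :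
    IsPrimeUpset (⋃ i, G i) := by
  simp only [IsPrimeUpset, Set.mem_iUnion]
  rintro x y ⟨i, hi⟩
  exact (hG i x y hi).imp (⟨i, ·⟩) (⟨i, ·⟩)

def IsMaxFilterIn (F G : Set α) : Prop :=
  Maximal (fun H => IsLatFilter H ∧ H ⊆ F) G

lemma isLatFilter_empty : IsLatFilter (∅ : Set α) :=
  ⟨fun _ _ h => h.elim, fun _ _ h => h.elim⟩

lemma isLatFilter_Ici (x : α) : IsLatFilter (Set.Ici x) :=
  ⟨fun _ _ hx hxy => le_trans hx hxy, fun _ _ hx hy => le_inf hx hy⟩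

lemma exists_isMaxFilterIn (hH : IsLatFilter H) (hHF : H ⊆ F) :
    ∃ G, H ⊆ G ∧ IsMaxFilterIn F G := by
  refine (zorn_subset_nonempty {G | IsLatFilter G ∧ G ⊆ F}
    (fun c hc hchain _ => ⟨⋃₀ c, ⟨⟨?_, ?_⟩, ?_⟩, fun _ => Set.subset_sUnion_of_mem⟩)
    H ⟨hH, hHF⟩)
  · rintro x y ⟨G, hG, hx⟩ hxy
    exact ⟨G, hG, (hc hG).1.1 hx hxy⟩
  · rintro x y ⟨G, hG, hx⟩ ⟨G', hG', hy⟩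
    rcases hchain.total hG hG' with h | h
    · exact ⟨G', hG', (hc hG').1.2 x y (h hx) hy⟩
    · exact ⟨G, hG, (hc hG).1.2 x y hx (h hy)⟩
  · exact Set.sUnion_subset fun G hG => (hc hG).2

-- The filter generated by `G ∪ {x}` would otherwise still lie in `F`.
lemma IsMaxFilterIn.exists_inf_notMem (hF : IsUpset F) (hG : IsMaxFilterIn F G)
    (hne : G.Nonempty) {x : α} (hx : x ∉ G) : ∃ y ∈ G, x ⊓ y ∉ F := by
  by_contra! hxF
  set G' := {z | ∃ y ∈ G, x ⊓ y ≤ z}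
  have hG' : IsLatFilter G' := by
    refine ⟨fun a b ⟨y, hy, hya⟩ hab => ⟨y, hy, hya.trans hab⟩, ?_⟩
    rintro a b ⟨y, hy, hya⟩ ⟨y', hy', hyb⟩
    exact ⟨y ⊓ y', hG.prop.1.2 y y' hy hy', le_inf ((inf_le_inf_left x inf_le_left).trans hya)
      ((inf_le_inf_left x inf_le_right).trans hyb)⟩
  have hGG' : G ⊆ G' := fun y hy => ⟨y, hy, inf_le_right⟩
  have hG'F : G' ⊆ F := fun z ⟨y, hy, hyz⟩ => hF (hxF y hy) hyz
  obtain ⟨y, hy⟩ := hne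
  exact hx ((hG.eq_of_subset ⟨hG', hG'F⟩ hGG').symm ▸ ⟨y, hy, inf_le_left⟩)

lemma IsPrimeUpset.exists_notMem_forall_mem {P : Set α}
    (hP : IsPrimeUpset P) {ι : Type*} {s : Finset ι} (hs : s.Nonempty) {G : ι → Set α}
    (hG : ∀ i, IsUpset (G i)) (h : ∀ i ∈ s, ¬G i ⊆ P) : ∃ w ∉ P, ∀ i ∈ s, w ∈ G i := by
  induction hs using Finset.Nonempty.cons_induction with
  | singleton i =>
    obtain ⟨t, ht, htP⟩ := Set.not_subset.1 (h i (Finset.mem_singleton_self i))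
    exact ⟨t, htP, by simpa⟩
  | cons i s hi hs ih =>
    obtain ⟨w, hwP, hw⟩ := ih fun j hj => h j (Finset.mem_cons_of_mem hj)
    obtain ⟨t, ht, htP⟩ := Set.not_subset.1 (h i (Finset.mem_cons_self i s))
    refine ⟨t ⊔ w, fun hmem => (hP t w hmem).elim htP hwP, ?_⟩
    simp only [Finset.mem_cons, forall_eq_or_imp]
    exact ⟨hG i ht le_sup_left, fun j hj => hG j (hw j hj) le_sup_right⟩

lemma IsPrimeUpset.sup'_notMem {G : Set α} (hG : IsPrimeUpset G)
    {ι : Type*} (s : Finset ι) (hs : s.Nonempty) (f : ι → α) (h : ∀ i ∈ s, f i ∉ G) :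
    s.sup' hs f ∉ G :=
  Finset.sup'_mem Gᶜ (fun x hx y hy hxy => (hG x y hxy).elim hx hy) s hs f h

end Lattice

section DistribLattice

variable {α : Type*} [DistribLattice α] {F G : Set α} {n : ℕ}

lemma inf'_inf_sup'_le {ι : Type*} {s : Finset ι} (hs : s.Nonempty) (w y : ι → α) :
    s.inf' hs (fun k => w k ⊓ s.sup' hs y) ≤ s.sup' hs (fun k => w k ⊓ y k) := by
  obtain ⟨k₀, hk₀⟩ := id hs
  calc _ ≤ s.inf' hs w ⊓ s.sup' hs y :=
        le_inf (Finset.inf'_mono_fun fun k _ => inf_le_left)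
          ((Finset.inf'_le _ hk₀).trans inf_le_right)
    _ = s.sup' hs (fun k => s.inf' hs w ⊓ y k) := Finset.sup'_inf_distrib_left _ _ _
    _ ≤ _ := Finset.sup'_mono_fun fun k hk => inf_le_inf_right _ (Finset.inf'_le _ hk)

lemma IsMaxFilterIn.isPrimeUpset (hF : IsUpset F) (hP : IsPrimeUpset F)
    (hG : IsMaxFilterIn F G) : IsPrimeUpset G := by
  intro a b hab
  by_contra! h
  obtain ⟨ya, hya, hyaF⟩ := hG.exists_inf_notMem hF ⟨_, hab⟩ h.1
  obtain ⟨yb, hyb, hybF⟩ := hG.exists_inf_notMem hF ⟨_, hab⟩ h.2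
  have hmem : (a ⊔ b) ⊓ (ya ⊓ yb) ∈ F :=
    hG.prop.2 (hG.prop.1.2 _ _ hab (hG.prop.1.2 _ _ hya hyb))
  have hle : (a ⊔ b) ⊓ (ya ⊓ yb) ≤ a ⊓ ya ⊔ b ⊓ yb := by
    rw [inf_sup_right]
    exact sup_le_sup (inf_le_inf_left a inf_le_left) (inf_le_inf_left b inf_le_right)
  exact (hP _ _ (hF hmem hle)).elim hyaF hybF

lemma card_le_of_forall_isMaxFilterIn (hn : 1 ≤ n) (hP : IsPrimeUpset F) (hN : IsNFilter n F)
    (T : Finset (Set α)) (hT : ∀ G ∈ T, IsMaxFilterIn F G) : T.card ≤ n := by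
  classical
  by_contra! hnT
  have hF := hN.1
  have hcard : n < (Finset.univ : Finset T).card := by simpa using hnT
  have huniv : (Finset.univ : Finset T).Nonempty := Finset.card_pos.1 (by omega)
  have herase : ∀ k : T, (Finset.univ.erase k).Nonempty := fun k => by
    rw [← Finset.card_pos, Finset.card_erase_of_mem (Finset.mem_univ k)]
    omega
  have hsep : ∀ j k : T, j ≠ k → ¬(j : Set α) ⊆ k := fun j k hjk hsub =>
    hjk (Subtype.ext ((hT j j.2).eq_of_subset (hT k k.2).prop hsub))
  -- `w k` lies in every filter of `T` but `k`.
  choose w hwk hwj using fun k : T =>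
    ((hT k k.2).isPrimeUpset hF hP).exists_notMem_forall_mem (herase k)
      (G := fun j : T => (j : Set α)) (fun j => (hT j j.2).prop.1.1)
      fun j hj => hsep j k (Finset.ne_of_mem_erase hj)
  have hne : ∀ k : T, (k : Set α).Nonempty := fun k => by
    obtain ⟨j, hj⟩ := herase k
    exact ⟨w j, hwj j k
      (Finset.mem_erase.2 ⟨(Finset.ne_of_mem_erase hj).symm, Finset.mem_univ k⟩)⟩
  choose y hy hyF using fun k : T => (hT k k.2).exists_inf_notMem hF (hne k) (hwk k)
  set Y := Finset.univ.sup' huniv y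
  have hYk : ∀ k : T, Y ∈ (k : Set α) := fun k =>
    (hT k k.2).prop.1.1 (hy k) (Finset.le_sup' y (Finset.mem_univ k))
  -- Any `n` of the `w j ⊓ Y` miss some index `k`, so they all lie in the filter `k ⊆ F`.
  have hzF : Finset.univ.inf' huniv (fun k => w k ⊓ Y) ∈ F := by
    refine hN.inf'_mem_of_forall_card_le _ _ _ fun t _ ht htn => ?_
    obtain ⟨k, -, hkt⟩ := Finset.exists_mem_notMem_of_card_lt_card (htn.trans_lt hcard)
    refine (hT k k.2).prop.2 (Finset.inf'_mem _ (fun a ha b hb => (hT k k.2).prop.1.2 a b ha hb)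
      _ _ _ fun j hj => (hT k k.2).prop.1.2 _ _ ?_ (hYk k))
    exact hwj j k (Finset.mem_erase.2 ⟨fun hjk => hkt (hjk ▸ hj), Finset.mem_univ k⟩)
  exact hP.sup'_notMem _ _ _ (fun k _ => hyF k) (hF hzF (inf'_inf_sup'_le huniv w y))

lemma exists_isMaxFilterIn_cover (hn : 1 ≤ n) (hP : IsPrimeUpset F) (hN : IsNFilter n F) :
    ∃ g : Fin n → Set α, (∀ i, IsMaxFilterIn F (g i)) ∧ F = ⋃ i, g i := by
  set M := {G | IsMaxFilterIn F G}
  have hM : M.Finite := by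
    by_contra hinf
    obtain ⟨T, hTM, hTcard⟩ := Set.Infinite.exists_subset_card_eq hinf (n + 1)
    have := card_le_of_forall_isMaxFilterIn hn hP hN T hTM
    omega
  obtain ⟨G₀, -, hG₀⟩ := exists_isMaxFilterIn isLatFilter_empty (Set.empty_subset F)
  obtain ⟨g, hg⟩ := exists_fin_range_eq_of_card_le (T := hM.toFinset) ⟨G₀, by simpa⟩
    (card_le_of_forall_isMaxFilterIn hn hP hN _ fun G hG => hM.mem_toFinset.1 hG)
  rw [Set.Finite.coe_toFinset] at hg
  refine ⟨g, fun i => hg.subset ⟨i, rfl⟩, ?_⟩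
  rw [← Set.sUnion_range, hg]
  refine Set.Subset.antisymm (fun x hx => ?_)
    (Set.sUnion_subset fun G (hG : IsMaxFilterIn F G) => hG.prop.2)
  obtain ⟨G, hxG, hG⟩ := exists_isMaxFilterIn (isLatFilter_Ici x) fun y hy => hN.1 hx hy
  exact ⟨G, hG, hxG le_rfl⟩

end DistribLattice

section DeMorgan

variable {L : Type*} [DeMorgan L]

lemma dneg_inf (x y : L) : ∼(x ⊓ y) = ∼x ⊔ ∼y := by
  rw [← DeMorgan.dneg_dneg (∼x ⊔ ∼y), DeMorgan.dneg_sup, DeMorgan.dneg_dneg, DeMorgan.dneg_dneg]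

lemma IsKalmanUpset.iUnion {ι : Type*} {G : ι → Set L} (hG : ∀ i, IsKalmanUpset (G i)) :
    IsKalmanUpset (⋃ i, G i) := by
  intro x y z u hmem
  obtain ⟨i, hi⟩ := Set.mem_iUnion.1 hmem
  exact Set.mem_iUnion.2 ⟨i, hG i x y z u hi⟩

lemma IsMaxFilterIn.complete_or_consistent {F G : Set L} (hF : IsUpset F) (hP : IsPrimeUpset F)
    (hK : IsKalmanUpset F) (hG : IsMaxFilterIn F G) :
    (∀ z, z ∈ G ∨ ∼z ∈ G) ∨ ∀ z ∈ G, ∼z ∉ G := by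
  by_contra! h
  obtain ⟨⟨a, ha, hna⟩, b, hb, hnb⟩ := h
  have ha' : a ⊔ ∼a ∉ G := fun hmem => (hG.isPrimeUpset hF hP _ _ hmem).elim ha hna
  obtain ⟨y, hy, hyF⟩ := hG.exists_inf_notMem hF ⟨b, hb⟩ ha'
  -- Kalman trades `b ⊓ ∼b ∈ G` for `a ⊔ ∼a` inside the join with `(a ⊔ ∼a) ⊓ y`.
  have hmem : b ⊓ ∼b ⊓ y ⊔ (a ⊔ ∼a) ⊓ y ∈ F :=
    hF (hG.prop.2 (hG.prop.1.2 _ _ (hG.prop.1.2 _ _ hb hnb) hy)) le_sup_left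
  exact hyF (by simpa using hK b a y _ hmem)

lemma IsDMHom.monotone {M : Type*} [DeMorgan M] {φ : L → M} (hφ : IsDMHom φ) : Monotone φ :=
  fun x y hxy => by
    rw [← inf_eq_left.2 hxy, hφ.1]
    exact inf_le_right

lemma isDMHom_pi_iff {ι : Type*} (h : L → ι → Bool × Bool) :
    IsDMHom h ↔ ∀ i, IsDMHom fun x => h x i := by
  constructor
  · rintro ⟨hinf, hsup, hneg⟩ i
    exact ⟨fun x y => congrFun (hinf x y) i, fun x y => congrFun (hsup x y) i,
      fun x => congrFun (hneg x) i⟩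
  · intro hh
    exact ⟨fun x y => funext fun i => (hh i).1 x y, fun x y => funext fun i => (hh i).2.1 x y,
      fun x => funext fun i => (hh i).2.2 x⟩

/-- For `t = true` (resp. `false`) these are the elements of the three-element subalgebra of
`DM₁` underlying `P₁` (resp. `K₁`). -/
def InThreeValued (t : Bool) (a : Bool × Bool) : Prop :=
  (t = true → a.2 = true → a.1 = true) ∧ (t = false → a.1 = true → a.2 = true)

lemma inf_dneg_le_sup_dneg_of_inThreeValued : ∀ {t : Bool} {a b : Bool × Bool},
    InThreeValued t a → InThreeValued t b → a ⊓ ∼a ≤ b ⊔ ∼b := by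
  unfold InThreeValued
  decide

lemma IsDMHom.isLatFilter_fst {φ : L → Bool × Bool} (hφ : IsDMHom φ) :
    IsLatFilter {x | (φ x).1 = true} := by
  refine ⟨fun x y hx hxy => Bool.le_iff_imp.1 (hφ.monotone hxy).1 hx, fun x y hx hy => ?_⟩
  simp_all [hφ.1]

lemma IsDMHom.isPrimeUpset_fst {φ : L → Bool × Bool} (hφ : IsDMHom φ) :
    IsPrimeUpset {x | (φ x).1 = true} := by
  intro x y hxy
  simpa [hφ.2.1] using hxy

lemma IsDMHom.isKalmanUpset_fst {φ : L → Bool × Bool} (hφ : IsDMHom φ) {t : Bool}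
    (ht : ∀ x, InThreeValued t (φ x)) : IsKalmanUpset {x | (φ x).1 = true} := by
  intro x y z u hmem
  simp only [Set.mem_ofPred_eq, hφ.1, hφ.2.1, hφ.2.2] at hmem ⊢
  have hle : φ x ⊓ ∼φ x ⊓ φ z ⊔ φ u ≤ (φ y ⊔ ∼φ y) ⊓ φ z ⊔ φ u :=
    sup_le_sup_right (inf_le_inf_right _ (inf_dneg_le_sup_dneg_of_inThreeValued (ht x) (ht y))) _
  exact Bool.le_iff_imp.1 hle.1 hmem

open Classical in
/-- De Morgan homomorphisms `L → DM₁` correspond to prime filters of `L` in this way. -/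
noncomputable def primeChar (G : Set L) (x : L) : Bool × Bool :=
  (decide (x ∈ G), decide (∼x ∉ G))

@[simp]
lemma primeChar_fst_eq_true {G : Set L} {x : L} : (primeChar G x).1 = true ↔ x ∈ G := by
  simp [primeChar]

@[simp]
lemma primeChar_snd_eq_true {G : Set L} {x : L} : (primeChar G x).2 = true ↔ ∼x ∉ G := by
  simp [primeChar]

lemma isDMHom_primeChar {G : Set L} (hG : IsLatFilter G) (hP : IsPrimeUpset G) :
    IsDMHom (primeChar G) := by
  have hinf : ∀ x y, x ⊓ y ∈ G ↔ x ∈ G ∧ y ∈ G := fun x y =>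
    ⟨fun h => ⟨hG.1 h inf_le_left, hG.1 h inf_le_right⟩, fun h => hG.2 x y h.1 h.2⟩
  have hsup : ∀ x y, x ⊔ y ∈ G ↔ x ∈ G ∨ y ∈ G := fun x y =>
    ⟨hP x y, fun h => h.elim (hG.1 · le_sup_left) (hG.1 · le_sup_right)⟩
  have hdneg : ∀ p : Bool × Bool, ∼p = (!p.2, !p.1) := fun _ => rfl
  refine ⟨fun x y => ?_, fun x y => ?_, fun x => ?_⟩
  · ext <;> rw [Bool.eq_iff_iff] <;> simp [hinf, hsup, dneg_inf, not_or]
  · ext <;> rw [Bool.eq_iff_iff] <;> simp [hinf, hsup, DeMorgan.dneg_sup, imp_iff_not_or]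
  · ext <;> simp [primeChar, hdneg, DeMorgan.dneg_dneg]

lemma exists_inThreeValued_primeChar {G : Set L}
    (hG : (∀ z, z ∈ G ∨ ∼z ∈ G) ∨ ∀ z ∈ G, ∼z ∉ G) :
    ∃ t, ∀ x, InThreeValued t (primeChar G x) := by
  rcases hG with hG | hG
  · refine ⟨true, fun x => ⟨fun _ h => ?_, by simp⟩⟩
    simpa using (hG x).resolve_right (primeChar_snd_eq_true.1 h)
  · refine ⟨false, fun x => ⟨by simp, fun _ h => ?_⟩⟩
    simpa using hG x (primeChar_fst_eq_true.1 h)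

end DeMorgan

theorem statement12_general {L : Type*} [DeMorgan L] (n : ℕ) (hn : 1 ≤ n)
    (F : Set L) :
    (IsKalmanUpset F ∧ IsPrimeUpset F ∧ IsNFilter n F) ↔
      ∃ (h : L → (Fin n → Bool × Bool)) (s : Fin n → Bool), IsDMHom h ∧
        (∀ (x : L) (i : Fin n),
          (s i = true → ((h x i).2 = true → (h x i).1 = true)) ∧
          (s i = false → ((h x i).1 = true → (h x i).2 = true))) ∧
        F = {x : L | ∃ i : Fin n, (h x i).1 = true} := by
  constructor
  · rintro ⟨hK, hP, hN⟩
    obtain ⟨g, hg, hFg⟩ := exists_isMaxFilterIn_cover hn hP hN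
    choose s hs using fun i =>
      exists_inThreeValued_primeChar ((hg i).complete_or_consistent hN.1 hP hK)
    refine ⟨fun x i => primeChar (g i) x, s, (isDMHom_pi_iff _).2 fun i =>
      isDMHom_primeChar (hg i).prop.1 ((hg i).isPrimeUpset hN.1 hP), fun x i => hs i x, ?_⟩
    simp [hFg, Set.ofPred_exists]
  · rintro ⟨h, s, hh, hs, rfl⟩
    have hφ := (isDMHom_pi_iff h).1 hh
    have : Nonempty (Fin n) := ⟨⟨0, hn⟩⟩
    rw [Set.ofPred_exists]
    exact ⟨IsKalmanUpset.iUnion fun i => (hφ i).isKalmanUpset_fst (hs · i),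
      IsPrimeUpset.iUnion fun i => (hφ i).isPrimeUpset_fst,
      isNFilter_iUnion (by simp) fun i => (hφ i).isLatFilter_fst⟩

/-- Kalman prime `n`-filters are precisely the homomorphic preimages of the
designated sets of the dual products `P₁^{⊗i} ⊗ K₁^{⊗j}` with `i + j = n`. -/
theorem statement12 {L : Type*} [DeMorgan L] [Nonempty L] (n : ℕ) (hn : 1 ≤ n)
    (F : Set L) (hF : IsUpset F) :
    (IsKalmanUpset F ∧ IsPrimeUpset F ∧ IsNFilter n F) ↔
      ∃ (h : L → (Fin n → Bool × Bool)) (s : Fin n → Bool), IsDMHom h ∧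
        (∀ (x : L) (i : Fin n),
          (s i = true → ((h x i).2 = true → (h x i).1 = true)) ∧
          (s i = false → ((h x i).1 = true → (h x i).2 = true))) ∧
        F = {x : L | ∃ i : Fin n, (h x i).1 = true} :=
  statement12_general n hn F
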